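/- Fix σ² > 0, P_J ≥ 0, P_A > 0, and a positive integer N. For each positive integer W, define the total detection error e_W(t) = Γ(WN, WN·t/μ₀)/Γ(WN) + 1 − Γ(WN, WN·t/μ₁)/Γ(WN), where μ₀ = σ² + P_J and μ₁ = σ² + P_J + P_A. Then the threshold t* = μ₀·μ₁·ln(μ₁/μ₀)/P_A is a stationary point of e_W for every W; i.e., the minimizing threshold is independent of W. -/

import Mathlib

open Real Set MeasureTheory

/-!
For `M = W N` and `t > 0`, the chain rule turns the derivative of `Γ(M, M t / μ) / Γ(M)` into
`-(M μ⁻¹ e^{-t/μ})^M t^{M-1} / Γ(M)`, minus the Gamma density of the average of `M` exponentials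
of mean `μ`. Hence `e_W'(t) = 0` as soon as `μ₀⁻¹ e^{-t/μ₀} = μ₁⁻¹ e^{-t/μ₁}`, a condition in which
`M` no longer appears: it says `t / μ₀ - t / μ₁ = log (μ₁ / μ₀)`, whose solution is `t*`.
-/

/-- Upper incomplete Gamma function `Γ(n, x) = ∫ₓ^∞ e^{-s} s^{n-1} ds`. -/
noncomputable def uiGamma (n : ℕ) (x : ℝ) : ℝ :=
  ∫ s in Set.Ioi x, Real.exp (-s) * s ^ (n - 1)

theorem hasDerivAt_integral_Ioi {E : Type*} [NormedAddCommGroup E] [NormedSpace ℝ E]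
    [CompleteSpace E] {f : ℝ → E} {a x : ℝ} (hf : IntegrableOn f (Ioi a)) (hax : a < x)
    (hfx : ContinuousAt f x) :
    HasDerivAt (fun y => ∫ s in Ioi y, f s) (-f x) x := by
  have hprim : HasDerivAt (fun y => ∫ s in a..y, f s) (f x) x :=
    intervalIntegral.integral_hasDerivAt_right
      ((intervalIntegrable_iff_integrableOn_Ioc_of_le hax.le).2 (hf.mono_set Ioc_subset_Ioi_self))
      (AEStronglyMeasurable.stronglyMeasurableAtFilter_of_mem hf.aestronglyMeasurable
        (Ioi_mem_nhds hax)) hfx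
  refine (hprim.const_sub (∫ s in Ioi a, f s)).congr_of_eventuallyEq ?_
  filter_upwards [Ioi_mem_nhds hax] with y hy
  rw [← intervalIntegral.integral_Ioi_sub_Ioi hf hy.le, sub_sub_cancel]

theorem integrableOn_exp_neg_mul_pow_Ioi {n : ℕ} (hn : n ≠ 0) :
    IntegrableOn (fun s : ℝ => exp (-s) * s ^ (n - 1)) (Ioi 0) := by
  refine (GammaIntegral_convergent (s := n) (by positivity)).congr_fun (fun s _ => ?_)
    measurableSet_Ioi
  rw [← Nat.cast_pred (Nat.pos_of_ne_zero hn)]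
  exact congrArg _ (rpow_natCast s (n - 1))

theorem hasDerivAt_uiGamma {n : ℕ} (hn : n ≠ 0) {x : ℝ} (hx : 0 < x) :
    HasDerivAt (uiGamma n) (-(exp (-x) * x ^ (n - 1))) x :=
  hasDerivAt_integral_Ioi (integrableOn_exp_neg_mul_pow_Ioi hn) hx (by fun_prop)

theorem hasDerivAt_uiGamma_mul_div {n : ℕ} (hn : n ≠ 0) {μ t : ℝ} (hμ : 0 < μ) (ht : 0 < t) :
    HasDerivAt (fun s => uiGamma n (n * s / μ))
      (-((n * (μ⁻¹ * exp (-(t / μ)))) ^ n * t ^ (n - 1))) t := by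
  have hc : HasDerivAt (fun s => n * s / μ) (n / μ) t := by
    simpa using ((hasDerivAt_id t).const_mul (n : ℝ)).div_const μ
  refine ((hasDerivAt_uiGamma hn (by positivity : 0 < n * t / μ)).comp t hc).congr_deriv ?_
  obtain ⟨m, rfl⟩ := Nat.exists_eq_succ_of_ne_zero hn
  rw [mul_pow, mul_pow, ← exp_nat_mul]
  simp only [Nat.succ_sub_one, pow_succ]
  ring_nf

theorem inv_mul_exp_neg_div_eq {μ₀ μ₁ t : ℝ} (h₀ : 0 < μ₀) (h₁ : 0 < μ₁)
    (ht : t / μ₀ - t / μ₁ = log (μ₁ / μ₀)) :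
    μ₀⁻¹ * exp (-(t / μ₀)) = μ₁⁻¹ * exp (-(t / μ₁)) := by
  rw [log_div h₁.ne' h₀.ne'] at ht
  rw [← exp_log (inv_pos.2 h₀), ← exp_log (inv_pos.2 h₁), ← exp_add, ← exp_add, log_inv,
    log_inv]
  congr 1
  linarith

/-- The threshold `t* = μ₀ μ₁ ln(μ₁/μ₀)/P_A` is a stationary point of the total
detection error `e_W(t)` for every number of Wardens `W`: the minimizing
threshold is independent of `W`. -/
theorem optimal_threshold_independent_of_W
    (σ2 PJ PA : ℝ) (hσ : 0 < σ2) (hPJ : 0 ≤ PJ) (hPA : 0 < PA)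
    (N : ℕ) (hN : 0 < N)
    (μ₀ μ₁ : ℝ) (hμ0 : μ₀ = σ2 + PJ) (hμ1 : μ₁ = σ2 + PJ + PA)
    (e : ℕ → ℝ → ℝ)
    (he : ∀ W t, e W t =
        uiGamma (W * N) ((W * N : ℕ) * t / μ₀) / Real.Gamma (W * N)
        + 1 - uiGamma (W * N) ((W * N : ℕ) * t / μ₁) / Real.Gamma (W * N)) :
    ∀ W : ℕ, 0 < W →
      deriv (e W) (μ₀ * μ₁ * Real.log (μ₁ / μ₀) / PA) = 0 := by
  intro W hW
  have hM : W * N ≠ 0 := by positivity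
  have h₀ : 0 < μ₀ := by linarith
  have h₁ : 0 < μ₁ := by linarith
  set t := μ₀ * μ₁ * log (μ₁ / μ₀) / PA
  have ht : 0 < t := by
    have : 0 < log (μ₁ / μ₀) := log_pos ((one_lt_div h₀).2 (by linarith))
    positivity
  have hthreshold : t / μ₀ - t / μ₁ = log (μ₁ / μ₀) := by
    have hPA' : PA = μ₁ - μ₀ := by linarith
    have : μ₁ - μ₀ ≠ 0 := by linarith
    simp only [t, hPA']
    field_simp
  have hD := (((hasDerivAt_uiGamma_mul_div hM h₀ ht).div_const (Gamma (W * N))).add_const 1).sub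
    ((hasDerivAt_uiGamma_mul_div hM h₁ ht).div_const (Gamma (W * N)))
  rw [show e W = _ from funext (he W)]
  exact hD.deriv.trans (by rw [inv_mul_exp_neg_div_eq h₀ h₁ hthreshold, sub_self])
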